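/- The set of solutions (z₁, z₂) ∈ ℝ² with z₁ > 0 and z₂ > 0 of the system (64/5)(z₁ − 1)z₁(8z₁ − 15z₂ + 8) = 0 and (64/5)(z₂ − 1)z₂(−15z₁ + 8z₂ + 8) = 0 is exactly {(1, 1), (1, 7/8), (7/8, 1), (8/7, 8/7)}. (These four points are the singularities at infinity of the normalized Ricci flow on the generalized Wallach space E₈/SO(8)×SO(8), corresponding to its four invariant Einstein metrics.) -/
import Mathlib


/-- First polynomial of the compactified normalized Ricci flow at infinity for the
generalized Wallach space E₈/SO(8)×SO(8). -/
noncomputable def u₁ (z₁ z₂ : ℝ) : ℝ :=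
  (64 / 5) * (z₁ - 1) * z₁ * (8 * z₁ - 15 * z₂ + 8)

/-- Second polynomial of the compactified normalized Ricci flow at infinity for the
generalized Wallach space E₈/SO(8)×SO(8). -/
noncomputable def u₂ (z₁ z₂ : ℝ) : ℝ :=
  (64 / 5) * (z₂ - 1) * z₂ * (-15 * z₁ + 8 * z₂ + 8)

theorem wallach_E8_SO8_SO8_singularities :
    {p : ℝ × ℝ | 0 < p.1 ∧ 0 < p.2 ∧ u₁ p.1 p.2 = 0 ∧ u₂ p.1 p.2 = 0} =
      {((1 : ℝ), (1 : ℝ)), ((1 : ℝ), (7 : ℝ) / 8), ((7 : ℝ) / 8, (1 : ℝ)),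
        ((8 : ℝ) / 7, (8 : ℝ) / 7)} := by
  ext ⟨x, y⟩
  simp only [Set.mem_setOf_eq, Set.mem_insert_iff, Set.mem_singleton_iff, Prod.mk.injEq, u₁, u₂]
  constructor
  · rintro ⟨hx, hy, h1, h2⟩
    have h1' : (x - 1) * (8 * x - 15 * y + 8) = 0 := by
      have := mul_ne_zero (by norm_num : (64:ℝ)/5 ≠ 0) (ne_of_gt hx)
      nlinarith [sq_nonneg ((x-1)*(8*x-15*y+8)), sq_nonneg x]
    have h2' : (y - 1) * (-15 * x + 8 * y + 8) = 0 := by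
      nlinarith [sq_nonneg ((y-1)*(-15*x+8*y+8)), sq_nonneg y]
    rcases mul_eq_zero.1 h1' with a | a <;> rcases mul_eq_zero.1 h2' with b | b
    · left; constructor <;> linarith
    · right; left; constructor <;> linarith
    · right; right; left; constructor <;> linarith
    · right; right; right; constructor <;> linarith
  · rintro (⟨rfl, rfl⟩ | ⟨rfl, rfl⟩ | ⟨rfl, rfl⟩ | ⟨rfl, rfl⟩) <;> norm_num
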